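/- arXiv:1910.06986 — 2 statements merged into one kernel-verified Lean document; each statement's English description precedes it below -/
import Mathlib

section
/- Let A be an n×n real SPD matrix, 𝓑 an m×m real SPD matrix, Π an n×m real matrix, ℐ an m×n real matrix with Π ℐ = Iₙ, and suppose (ℐv)ᵀ 𝓑 (ℐv) ≤ β · vᵀ A v for all v ∈ ℝⁿ, for some β > 0. Let M be an n×n real matrix with M + Mᵀ − A SPD, let M̄ = M (M + Mᵀ − A)⁻¹ Mᵀ, and define the additive auxiliary space preconditioner by B_add⁻¹ = M̄⁻¹ + Π 𝓑⁻¹ Πᵀ. Then vᵀ A⁻¹ v ≤ β · vᵀ B_add⁻¹ v for all v ∈ ℝⁿ. -/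
/-!
Put `w = A⁻¹ v`. Since `P J = 1`, `vᵀ A⁻¹ v = wᵀ A w = (Pᵀ v) ⬝ (J w)`, and Cauchy–Schwarz for
the dual pair of norms of `B` and `B⁻¹`, followed by the stability of `J`, gives
`(vᵀ A⁻¹ v)² ≤ (vᵀ P B⁻¹ Pᵀ v) · β vᵀ A⁻¹ v`. The smoother only adds a nonnegative term:
`M (M + Mᵀ - A)⁻¹ Mᵀ` is congruent to a positive definite matrix, hence positive semidefinite,
and so is its inverse.
-/

open Matrix

namespace Matrix

variable {ι κ : Type*} [Fintype ι] [Fintype κ]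

theorem IsSymm.dotProduct_mulVec_comm {B : Matrix ι ι ℝ} (hB : B.IsSymm) (x y : ι → ℝ) :
    x ⬝ᵥ B *ᵥ y = y ⬝ᵥ B *ᵥ x := by
  rw [dotProduct_mulVec, ← mulVec_transpose, hB.eq, dotProduct_comm]

theorem dotProduct_mul_mul_transpose_mulVec (P : Matrix ι κ ℝ) (C : Matrix κ κ ℝ)
    (v : ι → ℝ) : v ⬝ᵥ (P * C * Pᵀ) *ᵥ v = (Pᵀ *ᵥ v) ⬝ᵥ C *ᵥ (Pᵀ *ᵥ v) := by
  rw [← mulVec_mulVec, ← mulVec_mulVec, dotProduct_mulVec, ← mulVec_transpose]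

theorem PosSemidef.sq_dotProduct_mulVec_le {B : Matrix ι ι ℝ} (hB : B.PosSemidef)
    (x y : ι → ℝ) : (x ⬝ᵥ B *ᵥ y) ^ 2 ≤ (x ⬝ᵥ B *ᵥ x) * (y ⬝ᵥ B *ᵥ y) := by
  let := B.toSeminormedAddCommGroup hB
  let := B.toInnerProductSpace hB
  have hinner (u w : ι → ℝ) : inner ℝ u w = u ⬝ᵥ B *ᵥ w := by
    change (B *ᵥ w) ⬝ᵥ star u = _
    rw [star_trivial, dotProduct_comm]
  simpa only [hinner, sq] using real_inner_mul_inner_self_le x y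

variable [DecidableEq ι]

theorem mulVec_inv_mulVec_of_isUnit {R : Type*} [CommRing R] {B : Matrix ι ι R} (hB : IsUnit B)
    (x : ι → R) : B *ᵥ (B⁻¹ *ᵥ x) = x := by
  rw [mulVec_mulVec, mul_nonsing_inv _ ((isUnit_iff_isUnit_det B).mp hB), one_mulVec]

theorem PosDef.sq_dotProduct_le {B : Matrix ι ι ℝ} (hB : B.PosDef) (a b : ι → ℝ) :
    (a ⬝ᵥ b) ^ 2 ≤ (a ⬝ᵥ B⁻¹ *ᵥ a) * (b ⬝ᵥ B *ᵥ b) := by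
  have hBc : B *ᵥ (B⁻¹ *ᵥ a) = a := mulVec_inv_mulVec_of_isUnit hB.isUnit a
  have hsymm : B.IsSymm := isHermitian_iff_isSymm.mp hB.isHermitian
  have hab : a ⬝ᵥ b = B⁻¹ *ᵥ a ⬝ᵥ B *ᵥ b := by
    rw [hsymm.dotProduct_mulVec_comm, hBc, dotProduct_comm]
  have hcc : B⁻¹ *ᵥ a ⬝ᵥ B *ᵥ (B⁻¹ *ᵥ a) = a ⬝ᵥ B⁻¹ *ᵥ a := by
    rw [hBc, dotProduct_comm]
  rw [hab, ← hcc]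
  exact hB.posSemidef.sq_dotProduct_mulVec_le _ _

variable [DecidableEq κ]

theorem PosDef.dotProduct_inv_mulVec_le_of_stable_rightInverse
    {A : Matrix ι ι ℝ} (hA : A.PosDef) {B : Matrix κ κ ℝ} (hB : B.PosDef)
    {P : Matrix ι κ ℝ} {J : Matrix κ ι ℝ} (hPJ : P * J = 1) {β : ℝ} (hβ : 0 ≤ β)
    (hstab : ∀ v, J *ᵥ v ⬝ᵥ B *ᵥ (J *ᵥ v) ≤ β * (v ⬝ᵥ A *ᵥ v)) (v : ι → ℝ) :
    v ⬝ᵥ A⁻¹ *ᵥ v ≤ β * (v ⬝ᵥ (P * B⁻¹ * Pᵀ) *ᵥ v) := by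
  set w := A⁻¹ *ᵥ v
  have henergy : v ⬝ᵥ w = w ⬝ᵥ A *ᵥ w := by
    rw [mulVec_inv_mulVec_of_isUnit hA.isUnit, dotProduct_comm]
  have hsplit : v ⬝ᵥ w = Pᵀ *ᵥ v ⬝ᵥ J *ᵥ w := by
    conv_lhs => rw [← one_mulVec w, ← hPJ, ← mulVec_mulVec]
    rw [dotProduct_mulVec, ← mulVec_transpose]
  have hsq : (v ⬝ᵥ w) ^ 2 ≤ (v ⬝ᵥ (P * B⁻¹ * Pᵀ) *ᵥ v) * (β * (v ⬝ᵥ w)) := by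
    rw [dotProduct_mul_mul_transpose_mulVec]
    calc (v ⬝ᵥ w) ^ 2 ≤ (Pᵀ *ᵥ v ⬝ᵥ B⁻¹ *ᵥ (Pᵀ *ᵥ v)) * (J *ᵥ w ⬝ᵥ B *ᵥ (J *ᵥ w)) :=
          hsplit ▸ hB.sq_dotProduct_le _ _
      _ ≤ (Pᵀ *ᵥ v ⬝ᵥ B⁻¹ *ᵥ (Pᵀ *ᵥ v)) * (β * (v ⬝ᵥ w)) :=
          mul_le_mul_of_nonneg_left (henergy ▸ hstab w)
            (hB.inv.posSemidef.dotProduct_mulVec_nonneg _)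
  have hw : 0 ≤ v ⬝ᵥ w := henergy ▸ hA.posSemidef.dotProduct_mulVec_nonneg w
  have hPBP : 0 ≤ v ⬝ᵥ (P * B⁻¹ * Pᵀ) *ᵥ v := by
    rw [dotProduct_mul_mul_transpose_mulVec]
    exact hB.inv.posSemidef.dotProduct_mulVec_nonneg _
  rcases hw.eq_or_lt with hzero | hpos
  · exact hzero ▸ mul_nonneg hβ hPBP
  · nlinarith

end Matrix

/-- Lower spectral bound for the additive auxiliary space preconditioner. -/
theorem stmt_7 {n m : ℕ}
    (A : Matrix (Fin n) (Fin n) ℝ) (hA : A.PosDef)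
    (B : Matrix (Fin m) (Fin m) ℝ) (hB : B.PosDef)
    (P : Matrix (Fin n) (Fin m) ℝ) (J : Matrix (Fin m) (Fin n) ℝ)
    (hPJ : P * J = 1)
    (β : ℝ) (hβ : 0 < β)
    (hstab : ∀ v : Fin n → ℝ,
      (J.mulVec v) ⬝ᵥ B.mulVec (J.mulVec v) ≤ β * (v ⬝ᵥ A.mulVec v))
    (M : Matrix (Fin n) (Fin n) ℝ) (hM : (M + Mᵀ - A).PosDef) :
    ∀ v : Fin n → ℝ,
      v ⬝ᵥ A⁻¹.mulVec v ≤
        β * (v ⬝ᵥ ((M * (M + Mᵀ - A)⁻¹ * Mᵀ)⁻¹ + P * B⁻¹ * Pᵀ).mulVec v) := by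
  intro v
  have hsmoother : ((M * (M + Mᵀ - A)⁻¹ * Mᵀ)⁻¹).PosSemidef := by
    simpa only [conjTranspose_eq_transpose_of_trivial] using
      (hM.inv.posSemidef.mul_mul_conjTranspose_same M).inv
  calc v ⬝ᵥ A⁻¹ *ᵥ v ≤ β * (v ⬝ᵥ (P * B⁻¹ * Pᵀ) *ᵥ v) :=
        hA.dotProduct_inv_mulVec_le_of_stable_rightInverse hB hPJ hβ.le hstab v
    _ ≤ _ := by
        rw [add_mulVec, dotProduct_add]
        gcongr
        exact le_add_of_nonneg_left (by simpa using hsmoother.dotProduct_mulVec_nonneg v)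
end

section
/- Let A be an n×n real SPD matrix, 𝓑 an m×m real SPD matrix, and Π an n×m real matrix such that (Πw)ᵀ A (Πw) ≤ γ · wᵀ 𝓑 w for all w ∈ ℝᵐ, for some γ > 0. Let M be an n×n real matrix with M + Mᵀ − A SPD (hence M invertible), let M̄ = M (M + Mᵀ − A)⁻¹ Mᵀ, and define the multiplicative auxiliary space preconditioner by B_mult⁻¹ = M̄⁻¹ + (I − M⁻ᵀ A) Π 𝓑⁻¹ Πᵀ (I − A M⁻¹). Then vᵀ B_mult⁻¹ v ≤ (γ + 2) · vᵀ A⁻¹ v for all v ∈ ℝⁿ. -/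
/-!
Write `u = M⁻¹ v` and `z = (I - A M⁻¹) v = M u - A u`. The smoother part of `vᵀ B_mult⁻¹ v`
is `t = uᵀ (M + Mᵀ - A) u`, and expanding shows `vᵀ A⁻¹ v - t = zᵀ A⁻¹ z`, so `0 ≤ t ≤ vᵀ A⁻¹ v`.
The auxiliary-space part is `(Πᵀ z)ᵀ 𝓑⁻¹ (Πᵀ z)`, which the dual form of the bound
`‖Π w‖²_A ≤ γ ‖w‖²_𝓑` controls by `γ zᵀ A⁻¹ z = γ (vᵀ A⁻¹ v - t)`.
Altogether `vᵀ B_mult⁻¹ v ≤ t + γ (vᵀ A⁻¹ v - t) ≤ max 1 γ · vᵀ A⁻¹ v`.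
-/

open Matrix

namespace Matrix

variable {ι κ : Type*} [Fintype ι] [Fintype κ]

lemma IsSymm.mulVec_dotProduct {A : Matrix ι ι ℝ} (hA : A.IsSymm) (x y : ι → ℝ) :
    (A *ᵥ x) ⬝ᵥ y = x ⬝ᵥ A *ᵥ y := by
  rw [dotProduct_comm, ← dotProduct_transpose_mulVec, hA.eq]

lemma dotProduct_transpose_mul_mul_mulVec (C : Matrix κ ι ℝ) (D : Matrix κ κ ℝ) (v : ι → ℝ) :
    v ⬝ᵥ (Cᵀ * D * C) *ᵥ v = (C *ᵥ v) ⬝ᵥ D *ᵥ (C *ᵥ v) := by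
  rw [Matrix.mul_assoc, ← mulVec_mulVec, ← mulVec_mulVec, dotProduct_transpose_mulVec,
    dotProduct_comm]

lemma PosSemidef.two_mul_mul_dotProduct_mulVec_le {X : Matrix ι ι ℝ} (hX : X.PosSemidef)
    (c : ℝ) (x y : ι → ℝ) :
    2 * c * (x ⬝ᵥ X *ᵥ y) ≤ c ^ 2 * (x ⬝ᵥ X *ᵥ x) + y ⬝ᵥ X *ᵥ y := by
  have hsymm : y ⬝ᵥ X *ᵥ x = x ⬝ᵥ X *ᵥ y := by
    rw [← (isHermitian_iff_isSymm.mp hX.isHermitian).mulVec_dotProduct, dotProduct_comm]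
  have hsq := hX.dotProduct_mulVec_nonneg (c • x - y)
  simp only [star_trivial, mulVec_sub, mulVec_smul, dotProduct_sub, sub_dotProduct,
    dotProduct_smul, smul_dotProduct, smul_eq_mul] at hsq
  rw [hsymm] at hsq
  nlinarith

variable [DecidableEq ι]

lemma isUnit_of_posDef_add_transpose {M : Matrix ι ι ℝ} (hM : (M + Mᵀ).PosDef) : IsUnit M := by
  refine mulVec_injective_iff_isUnit.mp fun x y hxy => ?_
  by_contra hne
  have hpos := hM.dotProduct_mulVec_pos (sub_ne_zero.mpr hne)
  have hker : M *ᵥ (x - y) = 0 := by rw [mulVec_sub, hxy, sub_self]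
  simp [add_mulVec, dotProduct_transpose_mulVec, hker] at hpos

lemma dotProduct_mul_inv_mul_transpose_inv_mulVec {N : Matrix ι ι ℝ} (hN : IsUnit N)
    (M : Matrix ι ι ℝ) (v : ι → ℝ) :
    v ⬝ᵥ (M * N⁻¹ * Mᵀ)⁻¹ *ᵥ v = (M⁻¹ *ᵥ v) ⬝ᵥ N *ᵥ (M⁻¹ *ᵥ v) := by
  rw [Matrix.mul_inv_rev, Matrix.mul_inv_rev,
    nonsing_inv_nonsing_inv _ ((isUnit_iff_isUnit_det N).mp hN), ← transpose_nonsing_inv,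
    ← Matrix.mul_assoc, dotProduct_transpose_mul_mul_mulVec]

lemma IsSymm.dotProduct_inv_mulVec_sub_symmetrized {A : Matrix ι ι ℝ} (hA : A.IsSymm)
    (hAu : IsUnit A) (M : Matrix ι ι ℝ) (u : ι → ℝ) :
    (M *ᵥ u) ⬝ᵥ A⁻¹ *ᵥ (M *ᵥ u) - u ⬝ᵥ (M + Mᵀ - A) *ᵥ u =
      (M *ᵥ u - A *ᵥ u) ⬝ᵥ A⁻¹ *ᵥ (M *ᵥ u - A *ᵥ u) := by
  have hinv : A⁻¹ *ᵥ (A *ᵥ u) = u := by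
    rw [mulVec_mulVec, nonsing_inv_mul _ ((isUnit_iff_isUnit_det A).mp hAu), one_mulVec]
  have hcross : (A *ᵥ u) ⬝ᵥ A⁻¹ *ᵥ (M *ᵥ u) = u ⬝ᵥ M *ᵥ u := by
    rw [hA.mulVec_dotProduct, mulVec_mulVec, mul_nonsing_inv _ ((isUnit_iff_isUnit_det A).mp hAu),
      one_mulVec]
  simp only [mulVec_sub, sub_mulVec, add_mulVec, dotProduct_sub, sub_dotProduct, dotProduct_add,
    hinv, hcross, dotProduct_transpose_mulVec, dotProduct_comm (M *ᵥ u) u,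
    dotProduct_comm (A *ᵥ u) u]
  ring

variable [DecidableEq κ]

lemma PosDef.transpose_mulVec_dotProduct_inv_le {A : Matrix ι ι ℝ} {B : Matrix κ κ ℝ}
    (hA : A.PosDef) (hB : IsUnit B) {P : Matrix ι κ ℝ} {γ : ℝ} (hγ : 0 < γ)
    (hP : ∀ w, (P *ᵥ w) ⬝ᵥ A *ᵥ (P *ᵥ w) ≤ γ * (w ⬝ᵥ B *ᵥ w)) (z : ι → ℝ) :
    (Pᵀ *ᵥ z) ⬝ᵥ B⁻¹ *ᵥ (Pᵀ *ᵥ z) ≤ γ * (z ⬝ᵥ A⁻¹ *ᵥ z) := by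
  have hAs : A.IsSymm := isHermitian_iff_isSymm.mp hA.isHermitian
  have hAA : ∀ x, A *ᵥ (A⁻¹ *ᵥ x) = x := fun x => by
    rw [mulVec_mulVec, mul_nonsing_inv _ ((isUnit_iff_isUnit_det A).mp hA.isUnit), one_mulVec]
  set w := B⁻¹ *ᵥ (Pᵀ *ᵥ z)
  have hBw : B *ᵥ w = Pᵀ *ᵥ z := by
    rw [mulVec_mulVec, mul_nonsing_inv _ ((isUnit_iff_isUnit_det B).mp hB), one_mulVec]
  have henergy : w ⬝ᵥ B *ᵥ w = (Pᵀ *ᵥ z) ⬝ᵥ w := by rw [hBw, dotProduct_comm]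
  have hcross : (A⁻¹ *ᵥ z) ⬝ᵥ A *ᵥ (P *ᵥ w) = (Pᵀ *ᵥ z) ⬝ᵥ w := by
    rw [← hAs.mulVec_dotProduct, hAA, dotProduct_mulVec, mulVec_transpose]
  have hdiag : (A⁻¹ *ᵥ z) ⬝ᵥ A *ᵥ (A⁻¹ *ᵥ z) = z ⬝ᵥ A⁻¹ *ᵥ z := by
    rw [hAA, dotProduct_comm]
  -- With `e = (Pᵀ z) ⬝ᵥ w`: `2 γ e ≤ γ² (z ⬝ᵥ A⁻¹ *ᵥ z) + ‖P w‖²_A ≤ γ² (z ⬝ᵥ A⁻¹ *ᵥ z) + γ e`.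
  have hyoung := hA.posSemidef.two_mul_mul_dotProduct_mulVec_le γ (A⁻¹ *ᵥ z) (P *ᵥ w)
  rw [hcross, hdiag] at hyoung
  have hbound := hP w
  rw [henergy] at hbound
  nlinarith

end Matrix

/-- Upper spectral bound for the multiplicative auxiliary space preconditioner. -/
theorem stmt_9 {n m : ℕ}
    (A : Matrix (Fin n) (Fin n) ℝ) (hA : A.PosDef)
    (B : Matrix (Fin m) (Fin m) ℝ) (hB : B.PosDef)
    (P : Matrix (Fin n) (Fin m) ℝ)
    (γ : ℝ) (hγ : 0 < γ)
    (hcont : ∀ w : Fin m → ℝ,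
      (P.mulVec w) ⬝ᵥ A.mulVec (P.mulVec w) ≤ γ * (w ⬝ᵥ B.mulVec w))
    (M : Matrix (Fin n) (Fin n) ℝ) (hM : (M + Mᵀ - A).PosDef) :
    ∀ v : Fin n → ℝ,
      v ⬝ᵥ ((M * (M + Mᵀ - A)⁻¹ * Mᵀ)⁻¹ +
        (1 - (Mᵀ)⁻¹ * A) * (P * B⁻¹ * Pᵀ) * (1 - A * M⁻¹)).mulVec v ≤
        (γ + 2) * (v ⬝ᵥ A⁻¹.mulVec v) := by
  intro v
  have hAs : A.IsSymm := isHermitian_iff_isSymm.mp hA.isHermitian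
  have hMu : IsUnit M :=
    isUnit_of_posDef_add_transpose (by simpa using hM.add_posSemidef hA.posSemidef)
  set u := M⁻¹ *ᵥ v
  have hv : M *ᵥ u = v := by
    rw [mulVec_mulVec, mul_nonsing_inv _ ((isUnit_iff_isUnit_det M).mp hMu), one_mulVec]
  set z := (1 - A * M⁻¹) *ᵥ v
  have hz : z = v - A *ᵥ u := by
    simp only [z, u, sub_mulVec, one_mulVec, mulVec_mulVec]
  have hsmoother := dotProduct_mul_inv_mul_transpose_inv_mulVec hM.isUnit M v
  have hcorrection : v ⬝ᵥ ((1 - (Mᵀ)⁻¹ * A) * (P * B⁻¹ * Pᵀ) * (1 - A * M⁻¹)) *ᵥ v =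
      (Pᵀ *ᵥ z) ⬝ᵥ B⁻¹ *ᵥ (Pᵀ *ᵥ z) := by
    have hleft : 1 - (Mᵀ)⁻¹ * A = (1 - A * M⁻¹)ᵀ := by
      rw [transpose_sub, transpose_one, transpose_mul, transpose_nonsing_inv, hAs.eq]
    have hmid : P * B⁻¹ * Pᵀ = Pᵀᵀ * B⁻¹ * Pᵀ := by rw [transpose_transpose]
    rw [hleft, hmid, dotProduct_transpose_mul_mul_mulVec, dotProduct_transpose_mul_mul_mulVec]
  have herror := hAs.dotProduct_inv_mulVec_sub_symmetrized hA.isUnit M u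
  rw [hv, ← hz] at herror
  have hdual := hA.transpose_mulVec_dotProduct_inv_le hB.isUnit hγ hcont z
  have hsmoother_nonneg : 0 ≤ u ⬝ᵥ (M + Mᵀ - A) *ᵥ u := by
    simpa using hM.posSemidef.dotProduct_mulVec_nonneg u
  have herror_nonneg : 0 ≤ z ⬝ᵥ A⁻¹ *ᵥ z := by
    simpa using hA.inv.posSemidef.dotProduct_mulVec_nonneg z
  rw [add_mulVec, dotProduct_add, hsmoother, hcorrection]
  nlinarith [mul_nonneg hγ.le hsmoother_nonneg]
end
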